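/- Let N ≥ 1, let x_1, …, x_{N+1} ∈ ℝ^N be affinely independent, fix α ≥ 0 and A* > 0, let y* lie in the open convex hull co{x_1,…,x_{N+1}}, and set s_i = A* e^{−α‖x_i − y*‖}/‖x_i − y*‖² (noise-free measurements). For y in the open convex hull write d_i = ‖x_i − y‖ (note d_i > 0) and let Â(y) = (Σ_{i=1}^{N+1} s_i)/(Σ_{i=1}^{N+1} e^{−α d_i}/d_i²) be the maximum-likelihood intensity estimate. If the gradient of the profit function vanishes at y, i.e. Σ_{i=1}^{N+1} (s_i d_i²/e^{−α d_i} − Â(y))(α + 2/d_i)(e^{−α d_i}/d_i³)(x_i − y) = 0, then y = y* and Â(y) = A*. Hence y* is the unique stationary point of the profit function in the open convex hull, and it is its global maximizer there. -/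

import Mathlib

/-! At a stationary point `y` the gradient is `∑ rᵢ qᵢ (xᵢ - y)` with weights `qᵢ > 0` and
residuals `rᵢ = sᵢ - Â(y) f(‖xᵢ - y‖)`, `f(d) = e^{-αd}/d²`, which sum to zero by the choice of
`Â(y)`. As the sensors form an affine basis, a vanishing combination `∑ cᵢ (xᵢ - y)` forces `c` to
be proportional to the barycentric coordinates of `y`, which are positive; with `∑ rᵢ = 0` every
residual vanishes, so `Â(y) f(‖xᵢ - y‖) = A* f(‖xᵢ - y*‖)` for all `i`. Since `f` is strictly
decreasing, if `Â(y) ≤ A*` every sensor is at least as close to `y` as to `y*`. Such points form a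
half-space, which then contains the convex hull of the sensors and so `y*`, forcing `y = y*`.
Maximality of `y*` is the pointwise inequality `a log t - t ≤ a log a - a`. -/

open Real Finset

section Geometry

variable {E : Type*} [NormedAddCommGroup E] [InnerProductSpace ℝ E]

theorem convex_setOf_norm_sub_le_norm_sub (w z : E) :
    Convex ℝ {p : E | ‖p - w‖ ≤ ‖p - z‖} := by
  have hset : {p : E | ‖p - w‖ ≤ ‖p - z‖} =
      {p | inner ℝ (z - w) p ≤ (‖z‖ ^ 2 - ‖w‖ ^ 2) / 2} := by
    ext p
    rw [Set.mem_ofPred_eq, Set.mem_ofPred_eq, ← sq_le_sq₀ (norm_nonneg _) (norm_nonneg _),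
      norm_sub_sq_real, norm_sub_sq_real, inner_sub_left, real_inner_comm z, real_inner_comm w]
    constructor <;> intro h <;> linarith
  rw [hset]
  exact convex_halfSpace_le (innerₛₗ ℝ (z - w)).isLinear _

theorem eq_of_mem_convexHull_of_forall_norm_sub_le {s : Set E} {w z : E}
    (hz : z ∈ convexHull ℝ s) (h : ∀ p ∈ s, ‖p - w‖ ≤ ‖p - z‖) : w = z := by
  have hzw : ‖z - w‖ ≤ ‖z - z‖ :=
    convexHull_min h (convex_setOf_norm_sub_le_norm_sub w z) hz
  rw [sub_self, norm_zero, norm_le_zero_iff, sub_eq_zero] at hzw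
  exact hzw.symm

end Geometry

namespace AffineBasis

variable {ι k V P : Type*} [AddCommGroup V] [AddTorsor V P]

theorem ne_of_forall_coord_pos [Ring k] [Preorder k] [Module k V] [Nontrivial ι]
    (b : AffineBasis ι k P) {y : P} (hy : ∀ j, 0 < b.coord j y) (i : ι) : b i ≠ y := by
  obtain ⟨j, hj⟩ := exists_ne i
  rintro rfl
  exact (hy j).ne' (b.coord_apply_ne hj)

theorem norm_sub_pos_of_mem_interior_convexHull {E : Type*} [Finite ι] [Nontrivial ι]
    [NormedAddCommGroup E] [NormedSpace ℝ E] (b : AffineBasis ι ℝ E) {y : E}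
    (hy : y ∈ interior (convexHull ℝ (Set.range b))) (i : ι) : 0 < ‖b i - y‖ :=
  norm_pos_iff.mpr <| sub_ne_zero.mpr <|
    b.ne_of_forall_coord_pos (by rwa [b.interior_convexHull] at hy) i

variable [Fintype ι]

theorem eq_sum_mul_coord_of_sum_smul_vsub_eq_zero [Ring k] [Module k V]
    (b : AffineBasis ι k P) {c : ι → k} {y : P} (h : ∑ j, c j • (b j -ᵥ y) = 0) (i : ι) :
    c i = (∑ j, c j) * b.coord i y := by
  classical
  have hi := congrArg (b.coord i).linear h
  simp only [map_sum, map_smul, AffineMap.linearMap_vsub, b.coord_apply, vsub_eq_sub,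
    smul_eq_mul, mul_sub, Finset.sum_sub_distrib, map_zero] at hi
  simpa [Finset.sum_mul, sub_eq_zero] using hi

theorem eq_zero_of_sum_mul_smul_vsub_eq_zero [Field k] [LinearOrder k] [IsStrictOrderedRing k]
    [Module k V] (b : AffineBasis ι k P) {y : P} (hy : ∀ j, 0 < b.coord j y) {r q : ι → k}
    (hq : ∀ j, 0 < q j) (hr : ∑ j, r j = 0) (h : ∑ j, (r j * q j) • (b j -ᵥ y) = 0) (i : ι) :
    r i = 0 := by
  set t := ∑ j, r j * q j
  have hrt : ∀ j, r j = t * (b.coord j y / q j) := fun j => by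
    rw [mul_div_assoc', ← b.eq_sum_mul_coord_of_sum_smul_vsub_eq_zero h j,
      mul_div_cancel_right₀ _ (hq j).ne']
  have hw : 0 < ∑ j, b.coord j y / q j :=
    Finset.sum_pos (fun j _ => div_pos (hy j) (hq j)) ⟨i, Finset.mem_univ i⟩
  have ht : t = 0 := by
    simp_rw [hrt, ← Finset.mul_sum] at hr
    exact (mul_eq_zero.mp hr).resolve_right hw.ne'
  rw [hrt i, ht, zero_mul]

end AffineBasis

theorem strictAntiOn_exp_neg_mul_div_sq {α : ℝ} (hα : 0 ≤ α) :
    StrictAntiOn (fun d => exp (-α * d) / d ^ 2) (Set.Ioi 0) := by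
  intro a (ha : 0 < a) b (hb : 0 < b) hab
  calc exp (-α * b) / b ^ 2 ≤ exp (-α * a) / b ^ 2 := by gcongr exp ?_ / _; nlinarith
    _ < exp (-α * a) / a ^ 2 := by gcongr

theorem mul_log_sub_le_mul_log_self_sub {a t : ℝ} (ha : 0 < a) (ht : 0 < t) :
    a * log t - t ≤ a * log a - a := by
  have h := mul_le_mul_of_nonneg_left (log_le_sub_one_of_pos (div_pos ht ha)) ha.le
  rw [log_div ht.ne' ha.ne', mul_sub_one, mul_div_cancel₀ _ ha.ne'] at h
  linarith

theorem eq_of_forall_mul_eq_mul_of_strictAntiOn {E : Type*} [NormedAddCommGroup E]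
    [InnerProductSpace ℝ E] {f : ℝ → ℝ} (hf : StrictAntiOn f (Set.Ioi 0))
    (hf_nonneg : ∀ d, 0 < d → 0 ≤ f d) {s : Set E} {y z : E}
    (hy : y ∈ convexHull ℝ s) (hz : z ∈ convexHull ℝ s)
    (hys : ∀ p ∈ s, 0 < ‖p - y‖) (hzs : ∀ p ∈ s, 0 < ‖p - z‖) {A B : ℝ} (hA : 0 < A)
    (hB : 0 < B) (h : ∀ p ∈ s, A * f ‖p - y‖ = B * f ‖p - z‖) : y = z := by
  wlog hAB : A ≤ B generalizing y z A B
  · exact (this hz hy hzs hys hB hA (fun p hp => (h p hp).symm) (le_of_not_ge hAB)).symm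
  refine eq_of_mem_convexHull_of_forall_norm_sub_le hz fun p hp => ?_
  rw [← hf.le_iff_ge (hzs p hp) (hys p hp)]
  refine le_of_mul_le_mul_left ?_ hA
  calc A * f ‖p - z‖ ≤ B * f ‖p - z‖ := by gcongr; exact hf_nonneg _ (hzs p hp)
    _ = A * f ‖p - y‖ := (h p hp).symm

theorem sum_div_sum_eq_of_forall_eq_mul {ι K : Type*} [Fintype ι] [Field K] {s g : ι → K}
    {A : K} (hs : ∀ i, s i = A * g i) (hg : ∑ i, g i ≠ 0) : (∑ i, s i) / ∑ i, g i = A := by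
  rw [Finset.sum_congr rfl fun i _ => hs i, ← Finset.mul_sum, mul_div_cancel_right₀ _ hg]

theorem AffineBasis.eq_of_sum_residual_mul_smul_sub_eq_zero {ι E : Type*} [Fintype ι]
    [Nontrivial ι] [NormedAddCommGroup E] [InnerProductSpace ℝ E] (b : AffineBasis ι ℝ E)
    {f : ℝ → ℝ} (hf : StrictAntiOn f (Set.Ioi 0)) (hf_pos : ∀ d, 0 < d → 0 < f d) {y z : E}
    (hy : y ∈ interior (convexHull ℝ (Set.range b)))
    (hz : z ∈ interior (convexHull ℝ (Set.range b))) {A Â : ℝ} (hA : 0 < A) {s q : ι → ℝ}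
    (hs : ∀ i, s i = A * f ‖b i - z‖) (hÂ : Â = (∑ i, s i) / ∑ i, f ‖b i - y‖)
    (hq : ∀ i, 0 < q i) (h : ∑ i, ((s i - Â * f ‖b i - y‖) * q i) • (b i - y) = 0) :
    y = z ∧ Â = A := by
  have hd : ∀ {w}, w ∈ interior (convexHull ℝ (Set.range b)) → ∀ i, 0 < ‖b i - w‖ :=
    b.norm_sub_pos_of_mem_interior_convexHull
  have hsum_pos : 0 < ∑ i, f ‖b i - y‖ :=
    Finset.sum_pos (fun i _ => hf_pos _ (hd hy i)) Finset.univ_nonempty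
  have hres : ∀ i, s i - Â * f ‖b i - y‖ = 0 :=
    b.eq_zero_of_sum_mul_smul_vsub_eq_zero (by rwa [b.interior_convexHull] at hy) hq
      (by rw [Finset.sum_sub_distrib, ← Finset.mul_sum, hÂ, div_mul_cancel₀ _ hsum_pos.ne',
        sub_self]) h
  have hÂ_pos : 0 < Â := by
    rw [hÂ]
    exact div_pos (Finset.sum_pos (fun i _ => hs i ▸ mul_pos hA (hf_pos _ (hd hz i)))
      Finset.univ_nonempty) hsum_pos
  have hyz : y = z :=
    eq_of_forall_mul_eq_mul_of_strictAntiOn hf (fun d hd => (hf_pos d hd).le)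
      (interior_subset hy) (interior_subset hz) (Set.forall_mem_range.mpr (hd hy))
      (Set.forall_mem_range.mpr (hd hz)) hÂ_pos hA
      (Set.forall_mem_range.mpr fun i => by rw [← hs i, ← sub_eq_zero.mp (hres i)])
  subst hyz
  exact ⟨rfl, hÂ ▸ sum_div_sum_eq_of_forall_eq_mul hs hsum_pos.ne'⟩

/-- Theorem 3 (main result): with noise-free measurements
`s i = A* e^{-α‖x i - y*‖}/‖x i - y*‖²` from a source `y*` in the open convex hull
(interior of the convex hull) of `N + 1` affinely independent sensors in `ℝ^N`, and
`Â(y) = (∑ s i)/(∑ e^{-α d i}/d i²)` the maximum-likelihood intensity estimate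
(`d i = ‖x i - y‖`), any point `y` of the open convex hull at which the gradient
`∑ i (s i d i²/e^{-α d i} - Â(y))(α + 2/d i)(e^{-α d i}/d i³)(x i - y)` of the profit
function vanishes satisfies `y = y*` and `Â(y) = A*`; hence `y*` is the unique
stationary point of the profit function `J` in the open convex hull and its global
maximizer there. -/
theorem unique_stationary_point_profit {N : ℕ} (hN : 1 ≤ N)
    (x : Fin (N + 1) → EuclideanSpace ℝ (Fin N))
    (hx : AffineIndependent ℝ x)
    (α Astar : ℝ) (hα : 0 ≤ α) (hAstar : 0 < Astar)
    (ystar : EuclideanSpace ℝ (Fin N))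
    (hystar : ystar ∈ interior (convexHull ℝ (Set.range x)))
    (s : Fin (N + 1) → ℝ)
    (hsdef : ∀ i, s i = Astar * exp (-α * ‖x i - ystar‖) / ‖x i - ystar‖ ^ 2)
    (Ahat : EuclideanSpace ℝ (Fin N) → ℝ)
    (hAhat : ∀ w, Ahat w = (∑ i, s i) / (∑ i, exp (-α * ‖x i - w‖) / ‖x i - w‖ ^ 2))
    (J : EuclideanSpace ℝ (Fin N) → ℝ)
    (hJ : ∀ w, J w = ∑ i, (s i * log (Ahat w * exp (-α * ‖x i - w‖) / ‖x i - w‖ ^ 2)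
                           - Ahat w * exp (-α * ‖x i - w‖) / ‖x i - w‖ ^ 2)) :
    (∀ y ∈ interior (convexHull ℝ (Set.range x)),
      (∑ i, ((s i * ‖x i - y‖ ^ 2 / exp (-α * ‖x i - y‖) - Ahat y)
              * (α + 2 / ‖x i - y‖)
              * (exp (-α * ‖x i - y‖) / ‖x i - y‖ ^ 3)) • (x i - y)) = 0 →
        y = ystar ∧ Ahat y = Astar) ∧
    (∀ y ∈ interior (convexHull ℝ (Set.range x)), J y ≤ J ystar) := by
  obtain ⟨b, rfl⟩ : ∃ b : AffineBasis (Fin (N + 1)) ℝ (EuclideanSpace ℝ (Fin N)), ⇑b = x :=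
    ⟨⟨x, hx, hx.affineSpan_eq_top_iff_card_eq_finrank_add_one.mpr (by simp)⟩, rfl⟩
  have : Nontrivial (Fin (N + 1)) := Fin.nontrivial_iff_two_le.mpr (by omega)
  have hd : ∀ {w}, w ∈ interior (convexHull ℝ (Set.range b)) → ∀ i, 0 < ‖b i - w‖ :=
    b.norm_sub_pos_of_mem_interior_convexHull
  have hf_pos : ∀ d, 0 < d → 0 < exp (-α * d) / d ^ 2 := fun d hd => by positivity
  have hs : ∀ i, s i = Astar * (exp (-α * ‖b i - ystar‖) / ‖b i - ystar‖ ^ 2) := fun i => by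
    rw [hsdef, mul_div_assoc]
  have hs_pos : ∀ i, 0 < s i := fun i => hs i ▸ mul_pos hAstar (hf_pos _ (hd hystar i))
  have hsum_pos : ∀ w ∈ interior (convexHull ℝ (Set.range b)),
      0 < ∑ i, exp (-α * ‖b i - w‖) / ‖b i - w‖ ^ 2 :=
    fun w hw => Finset.sum_pos (fun i _ => hf_pos _ (hd hw i)) Finset.univ_nonempty
  have hstationary : ∀ y ∈ interior (convexHull ℝ (Set.range b)),
      (∑ i, ((s i - Ahat y * (exp (-α * ‖b i - y‖) / ‖b i - y‖ ^ 2))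
        * ((α + 2 / ‖b i - y‖) / ‖b i - y‖)) • (b i - y)) = 0 → y = ystar ∧ Ahat y = Astar :=
    fun y hy => b.eq_of_sum_residual_mul_smul_sub_eq_zero (strictAntiOn_exp_neg_mul_div_sq hα)
      hf_pos hy hystar hAstar hs (hAhat y) fun i => have := hd hy i; by positivity
  refine ⟨fun y hy hgrad => hstationary y hy ?_, fun y hy => ?_⟩
  · rw [← hgrad]
    refine Finset.sum_congr rfl fun i _ => ?_
    have := (hd hy i).ne'
    congr 1
    field_simp
  · have hAhat_pos : 0 < Ahat y :=
      hAhat y ▸ div_pos (Finset.sum_pos (fun i _ => hs_pos i) Finset.univ_nonempty)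
        (hsum_pos y hy)
    have hAhat_star : Ahat ystar = Astar :=
      hAhat ystar ▸ sum_div_sum_eq_of_forall_eq_mul hs (hsum_pos ystar hystar).ne'
    rw [hJ, hJ, hAhat_star]
    refine Finset.sum_le_sum fun i _ => ?_
    rw [← hsdef]
    have := hd hy i
    exact mul_log_sub_le_mul_log_self_sub (hs_pos i) (by positivity)
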